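/- In type Cₙ, if ξᵢ = ε_{bᵢ} + ε_{aᵢ} and ξⱼ is a positive root of the form ε_{bⱼ} + ε_{aⱼ} or ε_{bⱼ} − ε_{aⱼ} with bᵢ, bⱼ, aᵢ, aⱼ positive indices, and aᵢ = bⱼ, then ξⱼ − ξᵢ or ξᵢ − ξⱼ is ± (ε_{bᵢ} ∓ ε_{aⱼ}), i.e., ξᵢ and ξⱼ are comparable under the order γ' ≻ γ iff γ' − γ ∈ Δ⁺ ∪ (−Δ⁺). Consequently, in a base S (whose elements are pairwise incomparable) the row indices and column indices of the coordinate pairs ℰ(ξ), ξ ∈ S, yield sets {a₁,…,a_k} and {b₁,…,b_k} with aᵢ ≠ bⱼ for all i ≠ j. -/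
import Mathlib


/-- The standard basis vector `ε_i` in `ℤ^n`. -/
def eVec (n : ℕ) (i : Fin n) : Fin n → ℤ := Pi.single i 1

/-- Positive roots of type `Cₙ`: `ε_i ± ε_j` for `i < j` and `2ε_i`. -/
def PosC (n : ℕ) : Set (Fin n → ℤ) :=
  {v | (∃ i j : Fin n, i < j ∧ (v = eVec n i + eVec n j ∨ v = eVec n i - eVec n j)) ∨
    ∃ i : Fin n, v = 2 • eVec n i}

/-- In type `Cₙ`: if `ξᵢ = ε_{bᵢ} + ε_{aᵢ}` and `ξⱼ` is a positive root of the form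
`ε_{bⱼ} + ε_{aⱼ}` or `ε_{bⱼ} − ε_{aⱼ}` (all indices positive), `ξᵢ ≠ ξⱼ`, and `aᵢ = bⱼ`,
then `ξᵢ` and `ξⱼ` are comparable: one of `ξᵢ − ξⱼ`, `ξⱼ − ξᵢ` is a positive root. -/
theorem stmt16 (n : ℕ) (bi ai bj aj : Fin n) (ξi ξj : Fin n → ℤ)
    (hi : ξi = eVec n bi + eVec n ai) (hbiai : bi ≠ ai)
    (hj : (ξj = eVec n bj + eVec n aj ∧ bj ≠ aj) ∨ (ξj = eVec n bj - eVec n aj ∧ bj < aj))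
    (hab : ai = bj) (hne : ξi ≠ ξj) :
    ξi - ξj ∈ PosC n ∨ ξj - ξi ∈ PosC n := by
  have memAdd : ∀ i j : Fin n, i ≠ j → eVec n i + eVec n j ∈ PosC n := by
    intro i j h
    rcases lt_or_gt_of_ne h with hlt | hgt
    · exact Or.inl ⟨i, j, hlt, Or.inl rfl⟩
    · exact Or.inl ⟨j, i, hgt, Or.inl (add_comm _ _)⟩
  have memSub : ∀ i j : Fin n, i < j → eVec n i - eVec n j ∈ PosC n := fun i j h =>
    Or.inl ⟨i, j, h, Or.inr rfl⟩
  rcases hj with ⟨hj, hbjaj⟩ | ⟨hj, hbjaj⟩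
  · -- ξj = ε_bj + ε_aj
    rcases lt_trichotomy bi aj with hlt | heq | hgt
    · left
      have key : ξi - ξj = eVec n bi - eVec n aj := by
        subst hi hj hab; abel
      rw [key]; exact memSub _ _ hlt
    · exfalso; apply hne
      subst hi hj hab heq; exact add_comm _ _
    · right
      have key : ξj - ξi = eVec n aj - eVec n bi := by
        subst hi hj hab; abel
      rw [key]; exact memSub _ _ hgt
  · -- ξj = ε_bj - ε_aj
    left
    have key : ξi - ξj = eVec n bi + eVec n aj := by
      subst hi hj hab; abel
    rw [key]
    by_cases h : bi = aj
    · subst h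
      exact Or.inr ⟨bi, (two_smul _ _).symm⟩
    · exact memAdd _ _ h
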